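/- The function g_L(n, m) = 2·cos²(π/m) − (1/2)·sin(π/n) − (1/2)·sin(2π/m)·tan(π/n) is strictly increasing in each of its variables on the region of real numbers n ≥ 3, m ≥ 4: if 3 ≤ n < n′ and 4 ≤ m < m′, then g_L(n, m) < g_L(n′, m) and g_L(n, m) < g_L(n, m′). -/

import Mathlib

/-! For `a ≥ 2` the angle `π / a` lies in `(0, π / 2]`, where `sin` and `tan` increase and `cos`
decreases; since `2π / m = π / (m / 2)`, all terms of `g_L` are controlled by such angles, and each
one moves in the favourable direction as `n` or `m` grows. -/

open Real

/-- The left-hand side `g_L(n, m)` of the reduced odd-case inequality. -/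
noncomputable def gL (n m : ℝ) : ℝ :=
  2 * Real.cos (π / m) ^ 2 - 1 / 2 * Real.sin (π / n) -
    1 / 2 * Real.sin (2 * π / m) * Real.tan (π / n)

lemma sin_pi_div_pos {a : ℝ} (ha : 1 < a) : 0 < sin (π / a) :=
  sin_pos_of_pos_of_lt_pi (div_pos pi_pos (by linarith))
    (div_lt_self pi_pos ha)

lemma sin_pi_div_lt_sin_pi_div {a b : ℝ} (ha : 2 ≤ a) (hab : a < b) :
    sin (π / b) < sin (π / a) := by
  have hlt : π / b < π / a := div_lt_div_of_pos_left pi_pos (by linarith) hab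
  have hle : π / a ≤ π / 2 := div_le_div_of_nonneg_left pi_pos.le two_pos ha
  have hpos : 0 < π / b := div_pos pi_pos (by linarith)
  exact strictMonoOn_sin ⟨by linarith, by linarith⟩ ⟨by linarith, hle⟩ hlt

lemma tan_pi_div_lt_tan_pi_div {a b : ℝ} (ha : 2 < a) (hab : a < b) :
    tan (π / b) < tan (π / a) :=
  tan_lt_tan_of_nonneg_of_lt_pi_div_two (div_pos pi_pos (by linarith)).le
    (div_lt_div_of_pos_left pi_pos two_pos ha) (div_lt_div_of_pos_left pi_pos (by linarith) hab)

lemma cos_sq_pi_div_lt_cos_sq_pi_div {a b : ℝ} (ha : 2 ≤ a) (hab : a < b) :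
    cos (π / a) ^ 2 < cos (π / b) ^ 2 := by
  have hsin := sin_pi_div_lt_sin_pi_div ha hab
  have hpos := sin_pi_div_pos (a := b) (by linarith)
  rw [cos_sq', cos_sq']
  nlinarith

lemma sin_two_pi_div_eq (m : ℝ) : sin (2 * π / m) = sin (π / (m / 2)) := by
  rw [div_div_eq_mul_div, mul_comm]

lemma gL_lt_gL_of_lt_left {n n' m : ℝ} (hn : 2 < n) (hm : 2 ≤ m) (hnn' : n < n') :
    gL n m < gL n' m := by
  have hsin_n := sin_pi_div_lt_sin_pi_div hn.le hnn'
  have htan_n := tan_pi_div_lt_tan_pi_div hn hnn'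
  have hsin_m : 0 ≤ sin (2 * π / m) :=
    sin_nonneg_of_nonneg_of_le_pi (by positivity)
      ((div_le_iff₀ (by linarith)).2 (by nlinarith [pi_pos]))
  unfold gL
  nlinarith [mul_le_mul_of_nonneg_left htan_n.le hsin_m]

lemma gL_lt_gL_of_lt_right {n m m' : ℝ} (hn : 2 < n) (hm : 4 ≤ m) (hmm' : m < m') :
    gL n m < gL n m' := by
  have hcos_m := cos_sq_pi_div_lt_cos_sq_pi_div (by linarith) hmm'
  have hsin_m : sin (2 * π / m') < sin (2 * π / m) := by
    rw [sin_two_pi_div_eq, sin_two_pi_div_eq]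
    exact sin_pi_div_lt_sin_pi_div (by linarith) (by linarith)
  have htan_n : 0 < tan (π / n) :=
    tan_pos_of_pos_of_lt_pi_div_two (div_pos pi_pos (by linarith))
      (div_lt_div_of_pos_left pi_pos two_pos hn)
  unfold gL
  nlinarith [mul_lt_mul_of_pos_right hsin_m htan_n]

/-- `g_L` is strictly increasing in each variable on the region `n ≥ 3`, `m ≥ 4`. -/
theorem stmt_11 (n n' m m' : ℝ) (hn : 3 ≤ n) (hm : 4 ≤ m) :
    (n < n' → gL n m < gL n' m) ∧ (m < m' → gL n m < gL n m') :=
  ⟨gL_lt_gL_of_lt_left (by linarith) (by linarith),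
    gL_lt_gL_of_lt_right (by linarith) hm⟩
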